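/- arXiv:1903.08341 — 7 statements merged into one kernel-verified Lean document; each statement's English description precedes it below -/
import Mathlib

section
/- Let F be a nonempty finite set (fast generators) and S a nonempty finite set (slow generators), disjoint from F, with α_i > 0, β_i ∈ ℝ for i ∈ F ∪ S and C_i(x) = (α_i/2)x² + β_i·x. For a total demand d ∈ ℝ split as d = d^{DA} + d^{RT}, let T(d^{DA}, d^{RT}) := Σ_{j∈S} C_j(x^{s*}_j) + Σ_{i∈F} C_i(x^{f*}_i + δ*_i), where (x^{f*}, x^{s*}) is the minimizer of total cost over {Σ_{i∈F∪S} x_i = d^{DA}} and δ* is the minimizer of Σ_{i∈F} C_i(x^{f*}_i + δ_i) over {Σ_{i∈F} δ_i = d^{RT}}. Let M(d) := min{Σ_{i∈F∪S} C_i(x_i) : Σ_{i∈F∪S} x_i = d} be the social optimum. Then T(d^{DA}, d^{RT}) ≥ M(d), with equality if and only if d^{RT} = 0 (equivalently, d^{DA} = d); moreover the day-ahead and real-time clearing prices satisfy λ^{DA} = λ^{RT} if and only if d^{RT} = 0. -/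
/-- Quadratic expansion identity around a point with marginal cost `l`. -/
lemma quad_expand (a b p x l : ℝ) (h : a * p + b = l) :
    a / 2 * x ^ 2 + b * x
      = (a / 2 * p ^ 2 + b * p) + l * (x - p) + a / 2 * (x - p) ^ 2 := by
  linear_combination (x - p) * h

/-- Two-stage settlement vs. social optimum. The day-ahead market clears
`d^{DA}` with minimizer `(x^{f*}, x^{s*})` (characterized by the KKT conditions: balance
and common marginal cost `λ^{DA}`); the real-time market clears `d^{RT}` with minimizer
`δ*` (balance and common real-time marginal cost `λ^{RT}`). Let `T` be the resulting
two-stage total cost and `M d` the social minimum. Then `T ≥ M`, with equality iff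
`d^{RT} = 0` (equivalently `d^{DA} = d`); moreover `λ^{DA} = λ^{RT}` iff `d^{RT} = 0`. -/
theorem two_stage_efficiency
    {ιF ιS : Type*} [Fintype ιF] [Nonempty ιF] [Fintype ιS] [Nonempty ιS]
    (αf βf : ιF → ℝ) (αs βs : ιS → ℝ)
    (hαf : ∀ i, 0 < αf i) (hαs : ∀ j, 0 < αs j)
    (d dDA dRT : ℝ) (hsplit : d = dDA + dRT)
    -- day-ahead minimizer (x^{f*}, x^{s*}) with common marginal cost λ^{DA}
    (xf : ιF → ℝ) (xs : ιS → ℝ) (lamDA : ℝ)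
    (hbalDA : ∑ i, xf i + ∑ j, xs j = dDA)
    (hmcf : ∀ i, αf i * xf i + βf i = lamDA)
    (hmcs : ∀ j, αs j * xs j + βs j = lamDA)
    -- real-time minimizer δ* with common marginal cost λ^{RT}
    (δ : ιF → ℝ) (lamRT : ℝ)
    (hbalRT : ∑ i, δ i = dRT)
    (hmcRT : ∀ i, αf i * (xf i + δ i) + βf i = lamRT)
    -- the two-stage total cost T(d^{DA}, d^{RT})
    (T : ℝ)
    (hT : T = ∑ j, (αs j / 2 * (xs j) ^ 2 + βs j * xs j)
        + ∑ i, (αf i / 2 * (xf i + δ i) ^ 2 + βf i * (xf i + δ i)))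
    -- the social optimum M(d)
    (M : ℝ)
    (hM : M = sInf {c : ℝ | ∃ x : ιF → ℝ, ∃ y : ιS → ℝ,
        (∑ i, x i + ∑ j, y j = d) ∧
        c = ∑ i, (αf i / 2 * (x i) ^ 2 + βf i * x i)
          + ∑ j, (αs j / 2 * (y j) ^ 2 + βs j * y j)}) :
    M ≤ T ∧ (T = M ↔ dRT = 0) ∧ (dRT = 0 ↔ dDA = d) ∧ (lamDA = lamRT ↔ dRT = 0) := by
  classical
  have hαf' : ∀ i, (αf i : ℝ) ≠ 0 := fun i => (hαf i).ne'
  have hαs' : ∀ j, (αs j : ℝ) ≠ 0 := fun j => (hαs j).ne'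
  obtain ⟨Bf, hBf⟩ : ∃ b : ℝ, b = ∑ i, (αf i)⁻¹ := ⟨_, rfl⟩
  obtain ⟨Bs, hBs⟩ : ∃ b : ℝ, b = ∑ j, (αs j)⁻¹ := ⟨_, rfl⟩
  have hBfpos : 0 < Bf := by
    rw [hBf]; exact Finset.sum_pos (fun i _ => inv_pos.2 (hαf i)) Finset.univ_nonempty
  have hBspos : 0 < Bs := by
    rw [hBs]; exact Finset.sum_pos (fun j _ => inv_pos.2 (hαs j)) Finset.univ_nonempty
  obtain ⟨A, hA⟩ : ∃ a : ℝ, a = Bf + Bs := ⟨_, rfl⟩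
  have hApos : 0 < A := by rw [hA]; exact add_pos hBfpos hBspos
  obtain ⟨lam, hlamdef⟩ : ∃ l : ℝ, l = (d + ∑ i, βf i / αf i + ∑ j, βs j / αs j) / A :=
    ⟨_, rfl⟩
  obtain ⟨pf, hpf⟩ : ∃ p : ιF → ℝ, p = fun i => (lam - βf i) / αf i := ⟨_, rfl⟩
  obtain ⟨ps, hps⟩ : ∃ p : ιS → ℝ, p = fun j => (lam - βs j) / αs j := ⟨_, rfl⟩
  have hmcpf : ∀ i, αf i * pf i + βf i = lam := by
    intro i; simp only [hpf]; field_simp [hαf' i]; ring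
  have hmcps : ∀ j, αs j * ps j + βs j = lam := by
    intro j; simp only [hps]; field_simp [hαs' j]; ring
  have hsumpf : ∑ i, pf i = lam * Bf - ∑ i, βf i / αf i := by
    rw [hBf, Finset.mul_sum, ← Finset.sum_sub_distrib]
    refine Finset.sum_congr rfl fun i _ => ?_
    simp only [hpf]
    field_simp [hαf' i]
  have hsumps : ∑ j, ps j = lam * Bs - ∑ j, βs j / αs j := by
    rw [hBs, Finset.mul_sum, ← Finset.sum_sub_distrib]
    refine Finset.sum_congr rfl fun j _ => ?_
    simp only [hps]
    field_simp [hαs' j]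
  have hlamA : lam * A = d + ∑ i, βf i / αf i + ∑ j, βs j / αs j := by
    rw [hlamdef, div_mul_cancel₀ _ hApos.ne']
  have hbalp : ∑ i, pf i + ∑ j, ps j = d := by
    rw [hsumpf, hsumps]
    have h : lam * Bf + lam * Bs = lam * A := by rw [hA]; ring
    linarith [hlamA, h]
  obtain ⟨Mval, hMval⟩ : ∃ m : ℝ, m = ∑ i, (αf i / 2 * (pf i) ^ 2 + βf i * pf i)
      + ∑ j, (αs j / 2 * (ps j) ^ 2 + βs j * ps j) := ⟨_, rfl⟩
  -- expansion of cost of any feasible point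
  have expand : ∀ (x : ιF → ℝ) (y : ιS → ℝ), (∑ i, x i + ∑ j, y j = d) →
      ∑ i, (αf i / 2 * (x i) ^ 2 + βf i * x i)
        + ∑ j, (αs j / 2 * (y j) ^ 2 + βs j * y j)
      = Mval + (∑ i, αf i / 2 * (x i - pf i) ^ 2
        + ∑ j, αs j / 2 * (y j - ps j) ^ 2) := by
    intro x y hxy
    have hF : ∑ i, (αf i / 2 * (x i) ^ 2 + βf i * x i)
        = ∑ i, ((αf i / 2 * (pf i) ^ 2 + βf i * pf i) + lam * (x i - pf i)
            + αf i / 2 * (x i - pf i) ^ 2) :=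
      Finset.sum_congr rfl fun i _ => quad_expand _ _ _ _ _ (hmcpf i)
    have hS : ∑ j, (αs j / 2 * (y j) ^ 2 + βs j * y j)
        = ∑ j, ((αs j / 2 * (ps j) ^ 2 + βs j * ps j) + lam * (y j - ps j)
            + αs j / 2 * (y j - ps j) ^ 2) :=
      Finset.sum_congr rfl fun j _ => quad_expand _ _ _ _ _ (hmcps j)
    have hlin : ∑ i, lam * (x i - pf i) + ∑ j, lam * (y j - ps j) = 0 := by
      rw [← Finset.mul_sum, ← Finset.mul_sum, ← mul_add]
      have h0 : (∑ i, (x i - pf i)) + ∑ j, (y j - ps j) = 0 := by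
        rw [Finset.sum_sub_distrib, Finset.sum_sub_distrib]
        linarith [hbalp, hxy]
      rw [h0, mul_zero]
    rw [hF, hS, hMval]
    simp only [Finset.sum_add_distrib]
    linarith [hlin]
  -- M = Mval
  have hMeq : M = Mval := by
    rw [hM]
    have hmem : Mval ∈ {c : ℝ | ∃ x : ιF → ℝ, ∃ y : ιS → ℝ,
        (∑ i, x i + ∑ j, y j = d) ∧
        c = ∑ i, (αf i / 2 * (x i) ^ 2 + βf i * x i)
          + ∑ j, (αs j / 2 * (y j) ^ 2 + βs j * y j)} := ⟨pf, ps, hbalp, hMval⟩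
    have hlb : ∀ c ∈ {c : ℝ | ∃ x : ιF → ℝ, ∃ y : ιS → ℝ,
        (∑ i, x i + ∑ j, y j = d) ∧
        c = ∑ i, (αf i / 2 * (x i) ^ 2 + βf i * x i)
          + ∑ j, (αs j / 2 * (y j) ^ 2 + βs j * y j)}, Mval ≤ c := by
      rintro c ⟨x, y, hxy, rfl⟩
      rw [expand x y hxy]
      have h1 : (0:ℝ) ≤ ∑ i, αf i / 2 * (x i - pf i) ^ 2 :=
        Finset.sum_nonneg fun i _ => by have := hαf i; positivity
      have h2 : (0:ℝ) ≤ ∑ j, αs j / 2 * (y j - ps j) ^ 2 :=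
        Finset.sum_nonneg fun j _ => by have := hαs j; positivity
      linarith
    exact le_antisymm (csInf_le ⟨Mval, hlb⟩ hmem) (le_csInf ⟨Mval, hmem⟩ hlb)
  -- the two-stage point is feasible
  have hbalT : ∑ i, (xf i + δ i) + ∑ j, xs j = d := by
    rw [Finset.sum_add_distrib]; linarith [hbalDA, hbalRT]
  have hTexp : T = Mval + (∑ i, αf i / 2 * ((xf i + δ i) - pf i) ^ 2
      + ∑ j, αs j / 2 * (xs j - ps j) ^ 2) := by
    rw [hT, add_comm]
    exact expand (fun i => xf i + δ i) xs hbalT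
  have hQF : (0:ℝ) ≤ ∑ i, αf i / 2 * ((xf i + δ i) - pf i) ^ 2 :=
    Finset.sum_nonneg fun i _ => by have := hαf i; positivity
  have hQS : (0:ℝ) ≤ ∑ j, αs j / 2 * (xs j - ps j) ^ 2 :=
    Finset.sum_nonneg fun j _ => by have := hαs j; positivity
  -- dRT in terms of the price gap
  have hδi : ∀ i, δ i = (lamRT - lamDA) * (αf i)⁻¹ := by
    intro i
    have h3 : (lamRT - lamDA) = δ i * αf i := by
      linear_combination hmcf i - hmcRT i
    rw [h3, mul_inv_cancel_right₀ (hαf' i)]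
  have hdRT : dRT = (lamRT - lamDA) * Bf := by
    rw [← hbalRT, hBf, Finset.mul_sum]
    exact Finset.sum_congr rfl fun i _ => hδi i
  have hprice : lamDA = lamRT ↔ dRT = 0 := by
    constructor
    · intro h; rw [hdRT, h]; ring
    · intro h
      rw [hdRT] at h
      rcases mul_eq_zero.1 h with h' | h'
      · linarith
      · exact absurd h' hBfpos.ne'
  -- T = Mval ↔ dRT = 0
  have hTM : T = Mval ↔ dRT = 0 := by
    constructor
    · intro h
      have hq : ∑ i, αf i / 2 * ((xf i + δ i) - pf i) ^ 2
          + ∑ j, αs j / 2 * (xs j - ps j) ^ 2 = 0 := by linarith [hTexp]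
      have hq1 : ∑ i, αf i / 2 * ((xf i + δ i) - pf i) ^ 2 = 0 :=
        le_antisymm (by linarith) hQF
      have hq2 : ∑ j, αs j / 2 * (xs j - ps j) ^ 2 = 0 :=
        le_antisymm (by linarith) hQS
      obtain ⟨i0⟩ := (inferInstance : Nonempty ιF)
      obtain ⟨j0⟩ := (inferInstance : Nonempty ιS)
      have hi0 : αf i0 / 2 * ((xf i0 + δ i0) - pf i0) ^ 2 = 0 :=
        (Finset.sum_eq_zero_iff_of_nonneg
          (fun i _ => by have := hαf i; positivity)).1 hq1 i0 (Finset.mem_univ _)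
      have hj0 : αs j0 / 2 * (xs j0 - ps j0) ^ 2 = 0 :=
        (Finset.sum_eq_zero_iff_of_nonneg
          (fun j _ => by have := hαs j; positivity)).1 hq2 j0 (Finset.mem_univ _)
      have hdi : (xf i0 + δ i0) - pf i0 = 0 := by
        have hsq : ((xf i0 + δ i0) - pf i0) ^ 2 = 0 := by
          rcases mul_eq_zero.1 hi0 with h' | h'
          · exfalso; have := hαf i0; linarith
          · exact h'
        exact pow_eq_zero_iff (by norm_num : (2:ℕ) ≠ 0) |>.1 hsq
      have hdj : xs j0 - ps j0 = 0 := by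
        have hsq : (xs j0 - ps j0) ^ 2 = 0 := by
          rcases mul_eq_zero.1 hj0 with h' | h'
          · exfalso; have := hαs j0; linarith
          · exact h'
        exact pow_eq_zero_iff (by norm_num : (2:ℕ) ≠ 0) |>.1 hsq
      have hRT : lamRT = lam := by
        linear_combination hmcpf i0 - hmcRT i0 + αf i0 * hdi
      have hDA : lamDA = lam := by
        linear_combination hmcps j0 - hmcs j0 + αs j0 * hdj
      exact hprice.1 (by rw [hDA, hRT])
    · intro h
      have hlameq : lamDA = lamRT := hprice.2 h
      have hdfi : ∀ i, (xf i + δ i) - pf i = (lamRT - lam) * (αf i)⁻¹ := by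
        intro i
        have h3 : (lamRT - lam) = ((xf i + δ i) - pf i) * αf i := by
          linear_combination hmcpf i - hmcRT i
        rw [h3, mul_inv_cancel_right₀ (hαf' i)]
      have hdsj : ∀ j, xs j - ps j = (lamDA - lam) * (αs j)⁻¹ := by
        intro j
        have h3 : (lamDA - lam) = (xs j - ps j) * αs j := by
          linear_combination hmcps j - hmcs j
        rw [h3, mul_inv_cancel_right₀ (hαs' j)]
      have hsum0 : (∑ i, ((xf i + δ i) - pf i)) + ∑ j, (xs j - ps j) = 0 := by
        rw [Finset.sum_sub_distrib, Finset.sum_sub_distrib]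
        linarith [hbalT, hbalp]
      have e1 : ∑ i, ((xf i + δ i) - pf i) = (lamRT - lam) * Bf := by
        rw [hBf, Finset.mul_sum]
        exact Finset.sum_congr rfl fun i _ => hdfi i
      have e2 : ∑ j, (xs j - ps j) = (lamDA - lam) * Bs := by
        rw [hBs, Finset.mul_sum]
        exact Finset.sum_congr rfl fun j _ => hdsj j
      rw [e1, e2] at hsum0
      have hAz : (lamRT - lam) * A = 0 := by
        rw [hA]; linear_combination hsum0 - Bs * hlameq
      have hlamRT : lamRT = lam := by
        rcases mul_eq_zero.1 hAz with h' | h'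
        · linarith
        · exact absurd h' hApos.ne'
      have hzF : ∀ i, (xf i + δ i) - pf i = 0 := by
        intro i; rw [hdfi i, hlamRT]; ring
      have hzS : ∀ j, xs j - ps j = 0 := by
        intro j; rw [hdsj j, hlameq, hlamRT]; ring
      have hz : ∑ i, αf i / 2 * ((xf i + δ i) - pf i) ^ 2
          + ∑ j, αs j / 2 * (xs j - ps j) ^ 2 = 0 := by
        rw [Finset.sum_eq_zero fun i _ => by rw [hzF i]; ring,
            Finset.sum_eq_zero fun j _ => by rw [hzS j]; ring]
        ring
      rw [hTexp, hz, add_zero]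
  refine ⟨by rw [hMeq]; linarith [hTexp, hQF, hQS], ?_, ?_, hprice⟩
  · rw [hMeq]; exact hTM
  · constructor <;> intro h <;> linarith
end

section
/- Fix real constants α^{RT} > α^{DA} > 0, β^{DA} ∈ ℝ and a demand d > 0. Define the single-load expenditure f(x) := (α^{DA}·x + β^{DA})·x + (α^{RT}·(d − x) + α^{DA}·x + β^{DA})·(d − x) for x ∈ ℝ. Then f attains its minimum over [0, ∞) at the unique point x* = (1 − α^{DA}/(2·α^{RT}))·d; in particular the optimal two-stage participation is d^{DA*} = (1 − α^{DA}/(2·α^{RT}))·d and d^{RT*} = (α^{DA}/(2·α^{RT}))·d. -/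
/-!
Completing the square, the expenditure is `f x = f x* + α^{RT} (x - x*)²`, so with `α^{RT} > 0` the
point `x*` is the unique global minimiser of `f` on all of `ℝ`; it lies in `[0, ∞)` because
`α^{DA} < 2 α^{RT}`.
-/

section Quadratic

variable {f : ℝ → ℝ} {k x₀ : ℝ}

lemma le_of_forall_eq_add_mul_sq (hk : 0 ≤ k) (hf : ∀ x, f x = f x₀ + k * (x - x₀) ^ 2) (x : ℝ) :
    f x₀ ≤ f x := by
  rw [hf x]
  exact le_add_of_nonneg_right (by positivity)

lemma eq_of_forall_eq_add_mul_sq (hk : k ≠ 0) (hf : ∀ x, f x = f x₀ + k * (x - x₀) ^ 2) {x : ℝ}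
    (hx : f x = f x₀) : x = x₀ := by
  have hsq : k * (x - x₀) ^ 2 = 0 := by linarith [hf x]
  simpa [hk, sub_eq_zero] using hsq

end Quadratic

section Expenditure

variable (aDA aRT bDA d : ℝ)

def expenditure (x : ℝ) : ℝ :=
  (aDA * x + bDA) * x + (aRT * (d - x) + aDA * x + bDA) * (d - x)

noncomputable def optimalDayAhead : ℝ := (1 - aDA / (2 * aRT)) * d

variable {aDA aRT d}

lemma expenditure_eq_add_mul_sq (hRT : aRT ≠ 0) (x : ℝ) :
    expenditure aDA aRT bDA d x = expenditure aDA aRT bDA d (optimalDayAhead aDA aRT d)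
      + aRT * (x - optimalDayAhead aDA aRT d) ^ 2 := by
  unfold expenditure optimalDayAhead
  field_simp
  ring

lemma optimalDayAhead_nonneg (hRT : 0 < aRT) (hle : aDA ≤ 2 * aRT) (hd : 0 ≤ d) :
    0 ≤ optimalDayAhead aDA aRT d := by
  have : aDA / (2 * aRT) ≤ 1 := (div_le_one (by positivity)).2 hle
  unfold optimalDayAhead
  exact mul_nonneg (by linarith) hd

end Expenditure

/-- Single strategic load's optimal participation. With
`α^{RT} > α^{DA} > 0`, `β^{DA} ∈ ℝ`, demand `d > 0`, and expenditure
`f x = (α^{DA} x + β^{DA}) x + (α^{RT} (d - x) + α^{DA} x + β^{DA}) (d - x)`,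
`f` attains its minimum over `[0, ∞)` at the unique point
`x* = (1 - α^{DA} / (2 α^{RT})) d`. -/
theorem single_load_optimal_participation
    (aDA aRT bDA d : ℝ) (h0 : 0 < aDA) (hlt : aDA < aRT) (hd : 0 < d)
    (f : ℝ → ℝ)
    (hf : ∀ x : ℝ, f x = (aDA * x + bDA) * x
        + (aRT * (d - x) + aDA * x + bDA) * (d - x))
    (xstar : ℝ) (hx : xstar = (1 - aDA / (2 * aRT)) * d) :
    0 ≤ xstar ∧
    (∀ x : ℝ, 0 ≤ x → f xstar ≤ f x) ∧
    (∀ x : ℝ, 0 ≤ x → f x = f xstar → x = xstar) := by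
  have hRT : 0 < aRT := h0.trans hlt
  have hsq : ∀ x, f x = f xstar + aRT * (x - xstar) ^ 2 := by
    intro x
    rw [hf, hf, hx]
    exact expenditure_eq_add_mul_sq bDA hRT.ne' x
  refine ⟨?_, fun x _ => le_of_forall_eq_add_mul_sq hRT.le hsq x,
    fun x _ => eq_of_forall_eq_add_mul_sq hRT.ne' hsq⟩
  rw [hx]
  exact optimalDayAhead_nonneg hRT (by linarith) hd.le
end

section
/- In the load-side Cournot game, fix a load l and fix the other loads' day-ahead participations d_k^{DA} ∈ ℝ for k ≠ l. Then the function d_l^{DA} ↦ c_l (load l's expenditure) attains its minimum over ℝ at the unique point (1 − α^{DA}/(2·α^{RT}))·d_l + (1/2)·Σ_{k≠l}(d_k − d_k^{DA}). -/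
/-!
Since `λ^{RT} = α^{RT}·(d_l - x + R) + λ^{DA}`, where `R` is the others' real-time
participation, the expenditure of load `l` collapses to `λ^{DA}·d_l + α^{RT}·(d_l - x)(d_l - x + R)`:
a quadratic in its day-ahead participation `x` with leading coefficient `α^{RT} > 0`.
Completing the square at its vertex `x⋆` gives `c x = c x⋆ + α^{RT}·(x - x⋆)²`.
-/

section UniqueMin

variable {𝕜 : Type*} [Field 𝕜] [LinearOrder 𝕜] [IsStrictOrderedRing 𝕜]

theorem unique_min_of_eq_add_mul_sq {f : 𝕜 → 𝕜} {a x₀ : 𝕜} (ha : 0 < a)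
    (hf : ∀ x, f x = f x₀ + a * (x - x₀) ^ 2) :
    (∀ x, f x₀ ≤ f x) ∧ ∀ x, f x = f x₀ → x = x₀ := by
  refine ⟨fun x => ?_, fun x hx => ?_⟩
  · rw [hf x]
    have := mul_nonneg ha.le (sq_nonneg (x - x₀))
    linarith
  · rw [hf x, add_eq_left, mul_eq_zero, pow_eq_zero_iff two_ne_zero, sub_eq_zero] at hx
    exact hx.resolve_left ha.ne'

end UniqueMin

namespace Cournot

/-- Expenditure of a load with demand `d` and day-ahead participation `x`, when the other
loads participate `S` day-ahead and `R` in real time. -/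
def expenditure (aDA aRT bDA d S R x : ℝ) : ℝ :=
  (aDA * (x + S) + bDA) * x + (aRT * ((d - x) + R) + (aDA * (x + S) + bDA)) * (d - x)

noncomputable def bestResponse (aDA aRT d R : ℝ) : ℝ :=
  (1 - aDA / (2 * aRT)) * d + 1 / 2 * R

theorem expenditure_eq_add_mul_sq {aRT : ℝ} (hRT : aRT ≠ 0) (aDA bDA d S R x : ℝ) :
    expenditure aDA aRT bDA d S R x =
      expenditure aDA aRT bDA d S R (bestResponse aDA aRT d R)
        + aRT * (x - bestResponse aDA aRT d R) ^ 2 := by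
  unfold expenditure bestResponse
  field_simp
  ring

end Cournot

open Cournot in
theorem cournot_best_response_general
    (L : ℕ)
    (aDA aRT bDA : ℝ) (h0 : 0 < aDA) (hlt : aDA < aRT)
    (dl : Fin L → ℝ)
    (l : Fin L) (dDA : Fin L → ℝ)
    (c : ℝ → ℝ)
    (hc : ∀ x : ℝ,
      c x = (aDA * (x + ∑ k ∈ Finset.univ.erase l, dDA k) + bDA) * x
        + (aRT * ((dl l - x) + ∑ k ∈ Finset.univ.erase l, (dl k - dDA k))
            + (aDA * (x + ∑ k ∈ Finset.univ.erase l, dDA k) + bDA)) * (dl l - x))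
    (xstar : ℝ)
    (hx : xstar = (1 - aDA / (2 * aRT)) * dl l
        + 1 / 2 * ∑ k ∈ Finset.univ.erase l, (dl k - dDA k)) :
    (∀ x : ℝ, c xstar ≤ c x) ∧ (∀ x : ℝ, c x = c xstar → x = xstar) := by
  set S := ∑ k ∈ Finset.univ.erase l, dDA k
  set R := ∑ k ∈ Finset.univ.erase l, (dl k - dDA k)
  have hRT : 0 < aRT := h0.trans hlt
  have hc' : c = expenditure aDA aRT bDA (dl l) S R := funext hc
  have hx' : xstar = bestResponse aDA aRT (dl l) R := hx
  subst hc' hx'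
  exact unique_min_of_eq_add_mul_sq hRT (expenditure_eq_add_mul_sq hRT.ne' _ _ _ _ _)

/-- Best response in the load-side Cournot game. Fix `α^{RT} > α^{DA} > 0`,
`β^{DA} ∈ ℝ`, `L ≥ 1` loads with demands `d_l > 0`, a load `l`, and the other loads'
day-ahead participations `d_k^{DA} ≥ 0` (`k ≠ l`). Load `l`'s expenditure, as a function
`c` of its own day-ahead participation `x` (with `λ^{DA} = α^{DA}·(x + ∑_{k≠l} d_k^{DA})
+ β^{DA}`, `λ^{RT} = α^{RT}·((d_l - x) + ∑_{k≠l}(d_k - d_k^{DA})) + λ^{DA}`,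
`c x = λ^{DA}·x + λ^{RT}·(d_l - x)`), attains its minimum over `ℝ` at the unique point
`(1 - α^{DA}/(2 α^{RT}))·d_l + (1/2)·∑_{k≠l}(d_k - d_k^{DA})`. -/
theorem cournot_best_response
    (L : ℕ) (hL : 1 ≤ L)
    (aDA aRT bDA : ℝ) (h0 : 0 < aDA) (hlt : aDA < aRT)
    (dl : Fin L → ℝ) (hdl : ∀ k, 0 < dl k)
    (l : Fin L) (dDA : Fin L → ℝ) (hdDA : ∀ k, 0 ≤ dDA k)
    (c : ℝ → ℝ)
    (hc : ∀ x : ℝ,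
      c x = (aDA * (x + ∑ k ∈ Finset.univ.erase l, dDA k) + bDA) * x
        + (aRT * ((dl l - x) + ∑ k ∈ Finset.univ.erase l, (dl k - dDA k))
            + (aDA * (x + ∑ k ∈ Finset.univ.erase l, dDA k) + bDA)) * (dl l - x))
    (xstar : ℝ)
    (hx : xstar = (1 - aDA / (2 * aRT)) * dl l
        + 1 / 2 * ∑ k ∈ Finset.univ.erase l, (dl k - dDA k)) :
    (∀ x : ℝ, c xstar ≤ c x) ∧ (∀ x : ℝ, c x = c xstar → x = xstar) :=
  cournot_best_response_general L aDA aRT bDA h0 hlt dl l dDA c hc xstar hx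
end

section
/- In the load-side Cournot game with L ≥ 1 loads of demands d_l > 0 and constants α^{RT} > α^{DA} > 0, β^{DA} ∈ ℝ, there is no Nash equilibrium in which d_l^{DA} = 0 for some load l; i.e., every Nash equilibrium satisfies d_l^{DA} > 0 for all l ∈ {1,…,L}. -/
/-- Expenditure of player `l` in the load-side Cournot game: given demands `dem`, a
profile `p` of day-ahead participations (real-time participation of `k` is
`dem k - p k`), prices are `λ^{DA} = α^{DA}·(∑ k, p k) + β^{DA}` and
`λ^{RT} = α^{RT}·(∑ k, dem k - p k) + λ^{DA}`, and the expenditure is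
`λ^{DA}·p l + λ^{RT}·(dem l - p l)`. -/
noncomputable def expend {ι : Type*} [Fintype ι] (aDA aRT bDA : ℝ)
    (dem p : ι → ℝ) (l : ι) : ℝ :=
  (aDA * ∑ k, p k + bDA) * p l
    + (aRT * ∑ k, (dem k - p k) + (aDA * ∑ k, p k + bDA)) * (dem l - p l)

/-- Nash equilibrium of the load-side Cournot game: every participation is nonnegative
and no player can lower its expenditure by unilaterally deviating to another
nonnegative day-ahead participation. -/
def IsNash {ι : Type*} [Fintype ι] [DecidableEq ι] (aDA aRT bDA : ℝ)
    (dem p : ι → ℝ) : Prop :=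
  (∀ k, 0 ≤ p k) ∧
    ∀ l : ι, ∀ y : ℝ, 0 ≤ y →
      expend aDA aRT bDA dem p l ≤ expend aDA aRT bDA dem (Function.update p l y) l

/-- First-order conditions for minimizing a strictly convex quadratic over `[0, ∞)`. -/
lemma quad_facts (a b : ℝ) (ha : 0 < a) (x : ℝ) (hx : 0 ≤ x)
    (h : ∀ y : ℝ, 0 ≤ y → a * x ^ 2 + b * x ≤ a * y ^ 2 + b * y) :
    0 ≤ 2 * a * x + b ∧ (0 < x → 2 * a * x + b ≤ 0) := by
  have h2a : (0 : ℝ) < 2 * a := by linarith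
  constructor
  · by_contra hlt
    push_neg at hlt
    set t : ℝ := -(2 * a * x + b) / (2 * a) with ht
    have hat : 2 * a * t = -(2 * a * x + b) := by
      rw [ht]; field_simp
    have htpos : 0 < t := div_pos (by linarith) h2a
    have h1 := h (x + t) (by linarith)
    nlinarith [mul_pos htpos (show (0:ℝ) < -(2 * a * x + b) by linarith)]
  · intro hxpos
    by_contra hgt
    push_neg at hgt
    set t : ℝ := min x ((2 * a * x + b) / (2 * a)) with ht
    have ht1 : t ≤ x := min_le_left _ _
    have ht2 : t ≤ (2 * a * x + b) / (2 * a) := min_le_right _ _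
    have htpos : 0 < t := lt_min hxpos (div_pos hgt h2a)
    have h1 := h (x - t) (by linarith)
    have hat : 2 * a * ((2 * a * x + b) / (2 * a)) = 2 * a * x + b := by field_simp
    have h3 : 2 * a * t ≤ 2 * a * x + b := by
      have := mul_le_mul_of_nonneg_left ht2 h2a.le
      linarith [hat ▸ this]
    nlinarith [mul_pos htpos hgt]

/-- In the load-side Cournot game with `L ≥ 1` loads of demands `d_l > 0`
and constants `α^{RT} > α^{DA} > 0`, `β^{DA} ∈ ℝ`, every Nash equilibrium satisfies
`d_l^{DA} > 0` for all `l`. -/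
theorem cournot_no_zero_day_ahead_equilibrium
    (L : ℕ) (hL : 1 ≤ L)
    (aDA aRT bDA : ℝ) (h0 : 0 < aDA) (hlt : aDA < aRT)
    (dl : Fin L → ℝ) (hdl : ∀ k, 0 < dl k)
    (p : Fin L → ℝ) (hp : IsNash aDA aRT bDA dl p) :
    ∀ l : Fin L, 0 < p l := by
  intro l
  obtain ⟨hpos, hnash⟩ := hp
  set T := ∑ k, dl k with hT
  set P := ∑ k, p k with hP
  have haRT : 0 < aRT := by linarith
  have key : ∀ k : Fin L,
      0 ≤ 2 * aRT * p k + ((aDA - aRT) * dl k - aRT * (T - (P - p k))) ∧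
      (0 < p k → 2 * aRT * p k + ((aDA - aRT) * dl k - aRT * (T - (P - p k))) ≤ 0) := by
    intro k
    have hE : ∀ y : ℝ, expend aDA aRT bDA dl (Function.update p k y) k
        = aRT * y ^ 2 + ((aDA - aRT) * dl k - aRT * (T - (P - p k))) * y
          + (aRT * (T - (P - p k)) + aDA * (P - p k) + bDA) * dl k := by
      intro y
      have hs1 : ∑ j, Function.update p k y j = P - p k + y := by
        rw [Finset.sum_update_of_mem (Finset.mem_univ k), ← Finset.erase_eq,
          Finset.sum_erase_eq_sub (Finset.mem_univ k)]
        ring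
      have hs2 : ∑ j, (dl j - Function.update p k y j) = T - (P - p k + y) := by
        rw [Finset.sum_sub_distrib, hs1]
      simp only [expend, hs1, hs2, Function.update_self]
      ring
    have hmin : ∀ y : ℝ, 0 ≤ y →
        aRT * (p k) ^ 2 + ((aDA - aRT) * dl k - aRT * (T - (P - p k))) * p k
          ≤ aRT * y ^ 2 + ((aDA - aRT) * dl k - aRT * (T - (P - p k))) * y := by
      intro y hy
      have h1 := hnash k y hy
      have hself := hE (p k)
      rw [Function.update_eq_self k p] at hself
      rw [hself, hE y] at h1
      linarith
    exact quad_facts aRT _ haRT (p k) (hpos k) hmin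
  by_contra hle
  push_neg at hle
  have hl0 : p l = 0 := le_antisymm hle (hpos l)
  have h1 := (key l).1
  rw [hl0] at h1
  have hTP : T - P < 0 := by nlinarith [hdl l]
  have hk : ∀ k, p k < dl k := by
    intro k
    rcases eq_or_lt_of_le (hpos k) with h | h
    · rw [← h]; exact hdl k
    · have h2 := (key k).2 h
      nlinarith [hdl k]
  have hPT : P < T := by
    rw [hP, hT]
    exact Finset.sum_lt_sum_of_nonempty ⟨⟨0, hL⟩, Finset.mem_univ _⟩ fun k _ => hk k
  linarith
end

section
/- In the load-side Cournot game with L ≥ 1 loads of demands d_l > 0 and constants α^{RT} > α^{DA} > 0, β^{DA} ∈ ℝ, there exists a unique Nash equilibrium, given for every l ∈ {1,…,L} by d_l^{DA*} = (1 − L·α^{DA}/((L+1)·α^{RT}))·d_l + (α^{DA}/((L+1)·α^{RT}))·Σ_{k≠l} d_k and d_l^{RT*} = (L·α^{DA}/((L+1)·α^{RT}))·d_l − (α^{DA}/((L+1)·α^{RT}))·Σ_{k≠l} d_k; moreover d_l^{DA*} > 0 for every l. -/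
lemma expend_update {ι : Type*} [Fintype ι] [DecidableEq ι] (q r b : ℝ)
    (dem p : ι → ℝ) (l : ι) (y : ℝ) :
    expend q r b dem (Function.update p l y) l
      = (q * ((∑ k ∈ Finset.univ.erase l, p k) + y) + b) * dem l
        + r * ((∑ k, dem k) - ((∑ k ∈ Finset.univ.erase l, p k) + y)) * (dem l - y) := by
  have h1 : (∑ k, Function.update p l y k) = y + ∑ k ∈ Finset.univ.erase l, p k := by
    rw [Finset.sum_update_of_mem (Finset.mem_univ l), Finset.erase_eq]
  have h2 : (∑ k, (dem k - Function.update p l y k))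
      = (∑ k, dem k) - (y + ∑ k ∈ Finset.univ.erase l, p k) := by
    rw [Finset.sum_sub_distrib, h1]
  simp only [expend, h1, h2, Function.update_self]
  ring

lemma quad_min_rev (r G x : ℝ) (hr : 0 < r) (hx : 0 ≤ x)
    (h : ∀ y, 0 ≤ y → 0 ≤ (y - x) * (r * (y - x) + G)) :
    0 ≤ G ∧ x * G = 0 := by
  have hG : 0 ≤ G := by
    by_contra hG
    push_neg at hG
    have hy : 0 ≤ x - G / (2 * r) := by
      have h3 : 0 < -G / (2 * r) := div_pos (neg_pos.mpr hG) (by linarith)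
      have h4 : x - G / (2 * r) = x + -G / (2 * r) := by ring
      linarith
    have h1 := h (x - G / (2 * r)) hy
    have h2 : r * (x - G / (2 * r) - x) = -G / 2 := by field_simp; ring
    nlinarith [h1, h2]
  refine ⟨hG, ?_⟩
  rcases eq_or_lt_of_le hx with hx0 | hxpos
  · rw [← hx0]; ring
  rcases eq_or_lt_of_le hG with hG0 | hGpos
  · rw [← hG0]; ring
  exfalso
  set e := min x (G / (2 * r)) with he
  have hepos : 0 < e := lt_min hxpos (by positivity)
  have hex : e ≤ x := min_le_left _ _
  have heG : r * e ≤ G / 2 := by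
    have h1 : e ≤ G / (2 * r) := min_le_right _ _
    have h2 : r * (G / (2 * r)) = G / 2 := by field_simp
    nlinarith
  have h1 := h (x - e) (by linarith)
  nlinarith [mul_pos hepos hGpos]

/-- Unique Nash equilibrium of the load-side Cournot game. With `L ≥ 1`
loads of demands `d_l > 0` and `α^{RT} > α^{DA} > 0`, `β^{DA} ∈ ℝ`, the profile
`d_l^{DA*} = (1 - L α^{DA}/((L+1) α^{RT})) d_l + (α^{DA}/((L+1) α^{RT})) ∑_{k≠l} d_k`
is the unique Nash equilibrium; the corresponding real-time participation is
`d_l^{RT*} = (L α^{DA}/((L+1) α^{RT})) d_l - (α^{DA}/((L+1) α^{RT})) ∑_{k≠l} d_k`,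
and `d_l^{DA*} > 0` for every `l`. -/
theorem cournot_unique_nash_equilibrium
    (L : ℕ) (hL : 1 ≤ L)
    (aDA aRT bDA : ℝ) (h0 : 0 < aDA) (hlt : aDA < aRT)
    (dl : Fin L → ℝ) (hdl : ∀ k, 0 < dl k)
    (pstar : Fin L → ℝ)
    (hpstar : ∀ l : Fin L,
      pstar l = (1 - (L : ℝ) * aDA / (((L : ℝ) + 1) * aRT)) * dl l
        + aDA / (((L : ℝ) + 1) * aRT) * ∑ k ∈ Finset.univ.erase l, dl k) :
    IsNash aDA aRT bDA dl pstar ∧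
    (∀ p : Fin L → ℝ, IsNash aDA aRT bDA dl p → p = pstar) ∧
    (∀ l : Fin L,
      dl l - pstar l = (L : ℝ) * aDA / (((L : ℝ) + 1) * aRT) * dl l
        - aDA / (((L : ℝ) + 1) * aRT) * ∑ k ∈ Finset.univ.erase l, dl k) ∧
    (∀ l : Fin L, 0 < pstar l) := by
  haveI : Nonempty (Fin L) := Fin.pos_iff_nonempty.mp hL
  have hR : (0:ℝ) < aRT := lt_trans h0 hlt
  have hL1 : (0:ℝ) < (L:ℝ) + 1 := by positivity
  have hRne : aRT ≠ 0 := ne_of_gt hR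
  have hL1ne : ((L:ℝ) + 1) ≠ 0 := ne_of_gt hL1
  have hTpos : 0 < ∑ k, dl k := Finset.sum_pos (fun k _ => hdl k) Finset.univ_nonempty
  -- simplified formula for pstar
  have hps : ∀ l, pstar l
      = (1 - aDA / aRT) * dl l + aDA / (((L:ℝ) + 1) * aRT) * ∑ k, dl k := by
    intro l
    have he : ∑ k ∈ Finset.univ.erase l, dl k = (∑ k, dl k) - dl l :=
      Finset.sum_erase_eq_sub (Finset.mem_univ l)
    rw [hpstar l, he]
    field_simp
    ring
  have hq1 : aDA / aRT < 1 := (div_lt_one hR).mpr hlt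
  have hppos : ∀ l, 0 < pstar l := by
    intro l
    rw [hps l]
    have h1 : 0 < (1 - aDA / aRT) * dl l := mul_pos (by linarith) (hdl l)
    have h2 : 0 < aDA / (((L:ℝ) + 1) * aRT) * ∑ k, dl k :=
      mul_pos (div_pos h0 (by positivity)) hTpos
    linarith
  -- sum of pstar
  have hcL : (L:ℝ) * (aDA / (((L:ℝ) + 1) * aRT)) = aDA / aRT - aDA / (((L:ℝ) + 1) * aRT) := by
    field_simp
    ring
  have hSstar : (∑ k, pstar k) = (1 - aDA / (((L:ℝ) + 1) * aRT)) * ∑ k, dl k := by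
    have h1 : (∑ k, pstar k)
        = ∑ k, ((1 - aDA / aRT) * dl k + aDA / (((L:ℝ) + 1) * aRT) * ∑ j, dl j) :=
      Finset.sum_congr rfl (fun k _ => hps k)
    rw [h1, Finset.sum_add_distrib, ← Finset.mul_sum, Finset.sum_const, Finset.card_univ,
      Fintype.card_fin, nsmul_eq_mul]
    linear_combination (∑ k, dl k) * hcL
  -- the first-order condition at pstar
  have hGstar : ∀ l, aDA * dl l
      + aRT * (pstar l + (∑ k, pstar k) - (∑ k, dl k) - dl l) = 0 := by
    intro l
    rw [hps l, hSstar]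
    field_simp
    ring
  refine ⟨⟨fun k => (hppos k).le, ?_⟩, ?_, ?_, hppos⟩
  · -- pstar is a Nash equilibrium
    intro l y hy
    have hsl : (∑ k ∈ Finset.univ.erase l, pstar k) + pstar l = ∑ k, pstar k :=
      Finset.sum_erase_add _ _ (Finset.mem_univ l)
    have hA : expend aDA aRT bDA dl pstar l
        = (aDA * ((∑ k ∈ Finset.univ.erase l, pstar k) + pstar l) + bDA) * dl l
          + aRT * ((∑ k, dl k) - ((∑ k ∈ Finset.univ.erase l, pstar k) + pstar l))
            * (dl l - pstar l) := by
      conv_lhs => rw [← Function.update_eq_self l pstar]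
      exact expend_update aDA aRT bDA dl pstar l (pstar l)
    rw [hA, expend_update]
    have h2 : ((aDA * ((∑ k ∈ Finset.univ.erase l, pstar k) + y) + bDA) * dl l
          + aRT * ((∑ k, dl k) - ((∑ k ∈ Finset.univ.erase l, pstar k) + y)) * (dl l - y))
        - ((aDA * ((∑ k ∈ Finset.univ.erase l, pstar k) + pstar l) + bDA) * dl l
          + aRT * ((∑ k, dl k) - ((∑ k ∈ Finset.univ.erase l, pstar k) + pstar l))
            * (dl l - pstar l))
        = aRT * (y - pstar l) ^ 2 := by
      linear_combination (y - pstar l) * hGstar l + aRT * (y - pstar l) * hsl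
    nlinarith [h2, mul_nonneg hR.le (sq_nonneg (y - pstar l))]
  · -- uniqueness
    intro p hp
    obtain ⟨hp0, hpmin⟩ := hp
    have key : ∀ l, 0 ≤ aDA * dl l
          + aRT * (p l + (∑ k, p k) - (∑ k, dl k) - dl l)
        ∧ p l * (aDA * dl l + aRT * (p l + (∑ k, p k) - (∑ k, dl k) - dl l)) = 0 := by
      intro l
      have hsl : (∑ k ∈ Finset.univ.erase l, p k) + p l = ∑ k, p k :=
        Finset.sum_erase_add _ _ (Finset.mem_univ l)
      apply quad_min_rev aRT _ (p l) hR (hp0 l)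
      intro y hy
      have h1 := hpmin l y hy
      have hA : expend aDA aRT bDA dl p l
          = (aDA * ((∑ k ∈ Finset.univ.erase l, p k) + p l) + bDA) * dl l
            + aRT * ((∑ k, dl k) - ((∑ k ∈ Finset.univ.erase l, p k) + p l))
              * (dl l - p l) := by
        conv_lhs => rw [← Function.update_eq_self l p]
        exact expend_update aDA aRT bDA dl p l (p l)
      rw [hA, expend_update] at h1
      have h2 : (y - p l) * (aRT * (y - p l)
            + (aDA * dl l + aRT * (p l + (∑ k, p k) - (∑ k, dl k) - dl l)))
          = ((aDA * ((∑ k ∈ Finset.univ.erase l, p k) + y) + bDA) * dl l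
              + aRT * ((∑ k, dl k) - ((∑ k ∈ Finset.univ.erase l, p k) + y)) * (dl l - y))
            - ((aDA * ((∑ k ∈ Finset.univ.erase l, p k) + p l) + bDA) * dl l
              + aRT * ((∑ k, dl k) - ((∑ k ∈ Finset.univ.erase l, p k) + p l))
                * (dl l - p l)) := by
        linear_combination (-(aRT * (y - p l))) * hsl
      linarith [h1, h2.ge, h2.le]
    -- S < T
    have hST : (∑ k, p k) < ∑ k, dl k := by
      by_contra hTS
      push_neg at hTS
      have hlt' : ∀ k ∈ Finset.univ, p k < dl k := by
        intro k _
        rcases mul_eq_zero.mp (key k).2 with h | h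
        · rw [h]; exact hdl k
        · nlinarith [hdl k, (key k).1]
      have := Finset.sum_lt_sum_of_nonempty Finset.univ_nonempty hlt'
      linarith
    -- every p k is positive, hence the FOC holds with equality
    have heq : ∀ k, aRT * p k
        = aRT * ((∑ j, dl j) - (∑ j, p j)) + (aRT - aDA) * dl k := by
      intro k
      have hpos : 0 < p k := by nlinarith [(key k).1, hdl k]
      rcases mul_eq_zero.mp (key k).2 with h | h
      · exact absurd h (ne_of_gt hpos)
      · linarith [h]
    have hSeq : aRT * (∑ k, p k)
        = (L:ℝ) * (aRT * ((∑ j, dl j) - (∑ j, p j))) + (aRT - aDA) * (∑ k, dl k) := by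
      calc aRT * (∑ k, p k) = ∑ k, aRT * p k := by rw [Finset.mul_sum]
        _ = ∑ k, (aRT * ((∑ j, dl j) - (∑ j, p j)) + (aRT - aDA) * dl k) :=
            Finset.sum_congr rfl (fun k _ => heq k)
        _ = (L:ℝ) * (aRT * ((∑ j, dl j) - (∑ j, p j))) + (aRT - aDA) * (∑ k, dl k) := by
            rw [Finset.sum_add_distrib, Finset.sum_const, Finset.card_univ,
              Fintype.card_fin, nsmul_eq_mul, ← Finset.mul_sum]
    have hps2 : ∀ l, aRT * ((L:ℝ) + 1) * pstar l
        = ((L:ℝ) + 1) * (aRT - aDA) * dl l + aDA * (∑ k, dl k) := by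
      intro l
      rw [hps l]
      field_simp
    funext l
    have hmul : aRT * ((L:ℝ) + 1) * p l = aRT * ((L:ℝ) + 1) * pstar l := by
      rw [hps2 l]
      linear_combination ((L:ℝ) + 1) * heq l - hSeq
    exact mul_left_cancel₀ (by positivity) hmul
  · intro l
    rw [hpstar l]
    ring
end

section
/- In the load-side Cournot game with L ≥ 1 loads of demands d_l > 0 and constants α^{RT} > α^{DA} > 0, β^{DA} ∈ ℝ, let L' be a nonempty subset of {1,…,L} with cardinality n := |L'|, and suppose a strategy profile satisfies d_l^{DA} = 0 for every l ∉ L' and the first-order condition d_l^{DA} = (1 − α^{DA}/(2·α^{RT}))·d_l + (1/2)·Σ_{k≠l}(d_k − d_k^{DA}) for every l ∈ L'. Then Σ_{l∈L'} d_l^{DA} = (1 − α^{DA}/((n+1)·α^{RT}))·Σ_{l∈L'} d_l + (n/(n+1))·Σ_{l∉L'} d_l, and this quantity is strictly less than Σ_{l=1}^{L} d_l. -/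
/-- Aggregation of the first-order conditions on a subset of active loads.
In the load-side Cournot game with `L ≥ 1` loads of demands `d_l > 0` and constants
`α^{RT} > α^{DA} > 0`, `β^{DA} ∈ ℝ`, let `L'` be a nonempty subset of the loads,
`n = |L'|`, and suppose a profile has `d_l^{DA} = 0` for `l ∉ L'` and satisfies the
first-order condition
`d_l^{DA} = (1 - α^{DA}/(2 α^{RT})) d_l + (1/2) ∑_{k≠l}(d_k - d_k^{DA})` for `l ∈ L'`.
Then `∑_{l∈L'} d_l^{DA} = (1 - α^{DA}/((n+1) α^{RT})) ∑_{l∈L'} d_l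
+ (n/(n+1)) ∑_{l∉L'} d_l`, and this quantity is strictly less than `∑_l d_l`. -/
theorem cournot_active_subset_aggregate
    (L : ℕ) (hL : 1 ≤ L)
    (aDA aRT bDA : ℝ) (h0 : 0 < aDA) (hlt : aDA < aRT)
    (dl : Fin L → ℝ) (hdl : ∀ k, 0 < dl k)
    (L' : Finset (Fin L)) (hL' : L'.Nonempty) (n : ℕ) (hn : n = L'.card)
    (dDA : Fin L → ℝ)
    (hzero : ∀ l ∉ L', dDA l = 0)
    (hfoc : ∀ l ∈ L',
      dDA l = (1 - aDA / (2 * aRT)) * dl l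
        + 1 / 2 * ∑ k ∈ Finset.univ.erase l, (dl k - dDA k)) :
    ∑ l ∈ L', dDA l
      = (1 - aDA / (((n : ℝ) + 1) * aRT)) * ∑ l ∈ L', dl l
        + (n : ℝ) / ((n : ℝ) + 1) * ∑ l ∈ L'ᶜ, dl l ∧
    ∑ l ∈ L', dDA l < ∑ l, dl l := by
  have hRT : (0:ℝ) < aRT := lt_trans h0 hlt
  have hRT0 : aRT ≠ 0 := ne_of_gt hRT
  set S := ∑ l ∈ L', dDA l with hS
  set D' := ∑ l ∈ L', dl l with hD'
  set D'' := ∑ l ∈ L'ᶜ, dl l with hD''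
  have hDsplit : ∑ l, dl l = D' + D'' := (Finset.sum_add_sum_compl L' dl).symm
  have hSuniv : ∑ l, dDA l = S := by
    rw [← Finset.sum_add_sum_compl L' dDA]
    have : ∑ l ∈ L'ᶜ, dDA l = 0 :=
      Finset.sum_eq_zero (fun l hl => hzero l (Finset.mem_compl.mp hl))
    rw [this, add_zero]
  -- rewrite the FOC
  have hx : ∀ l ∈ L', dDA l = (1 - aDA / aRT) * dl l + ((D' + D'') - S) := by
    intro l hl
    have h1 := hfoc l hl
    have herase : ∑ k ∈ Finset.univ.erase l, (dl k - dDA k)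
        = (∑ k, (dl k - dDA k)) - (dl l - dDA l) :=
      Finset.sum_erase_eq_sub (Finset.mem_univ l)
    have hsum : ∑ k, (dl k - dDA k) = (D' + D'') - S := by
      rw [Finset.sum_sub_distrib, hSuniv, hDsplit]
    rw [herase, hsum] at h1
    have hdiv : aDA / aRT = 2 * (aDA / (2 * aRT)) := by field_simp
    rw [hdiv]
    linarith [h1]
  have hsumfoc : S = (1 - aDA / aRT) * D' + (n : ℝ) * ((D' + D'') - S) := by
    calc S = ∑ l ∈ L', ((1 - aDA / aRT) * dl l + ((D' + D'') - S)) :=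
            Finset.sum_congr rfl hx
      _ = (1 - aDA / aRT) * D' + (n : ℝ) * ((D' + D'') - S) := by
            rw [Finset.sum_add_distrib, ← Finset.mul_sum, Finset.sum_const, hn]
            push_cast; ring
  have hn1 : (0:ℝ) < (n:ℝ) + 1 := by positivity
  have hD'pos : 0 < D' := Finset.sum_pos (fun i _ => hdl i) hL'
  have hD''nonneg : 0 ≤ D'' := Finset.sum_nonneg (fun i _ => le_of_lt (hdl i))
  have heq : S = (1 - aDA / (((n : ℝ) + 1) * aRT)) * D' + (n : ℝ) / ((n : ℝ) + 1) * D'' := by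
    have h2 : S * ((n:ℝ) + 1) = ((n:ℝ) + 1 - aDA / aRT) * D' + (n:ℝ) * D'' := by
      linarith [hsumfoc]
    field_simp at h2 ⊢
    linear_combination h2
  refine ⟨heq, ?_⟩
  rw [hDsplit, heq]
  have h3 : 0 < aDA / (((n:ℝ)+1) * aRT) := by positivity
  have h4 : (n:ℝ) / ((n:ℝ)+1) < 1 := by
    rw [div_lt_one hn1]; linarith
  nlinarith [mul_le_mul_of_nonneg_right (le_of_lt h4) hD''nonneg,
    mul_pos h3 hD'pos]
end

section
/- At the unique Nash equilibrium of the load-side Cournot game with L ≥ 1 loads of demands d_l > 0 and constants α^{RT} > α^{DA} > 0, β^{DA} ∈ ℝ, the aggregate participations satisfy Σ_{l=1}^{L} d_l^{DA*} = (1 − α^{DA}/((L+1)·α^{RT}))·Σ_{l=1}^{L} d_l and Σ_{l=1}^{L} d_l^{RT*} = (α^{DA}/((L+1)·α^{RT}))·Σ_{l=1}^{L} d_l. Consequently, writing d := Σ_{l=1}^{L} d_l, one has d > Σ_l d_l^{DA*} > (L/(L+1))·d and (1/(L+1))·d > Σ_l d_l^{RT*} > 0, and the resulting prices satisfy λ^{RT}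 > λ^{DA}, i.e., the price spread λ^{DA} − λ^{RT} is strictly negative. -/
/-
At an equilibrium every load's marginal expenditure
`g_l = α^{RT}·d_l^{DA} + (α^{DA} - α^{RT})·d_l - α^{RT}·∑_k d_k^{RT}` is nonnegative, and vanishes when
`d_l^{DA} > 0` (the expenditure is a convex quadratic in the load's own participation). If the
aggregate real-time participation `R` were `≤ 0`, each load would have `d_l^{RT} > 0`, forcing
`R > 0`; so `R > 0`, which in turn makes every load active. Summing `g_l = 0` over the `L` loads
gives `(L+1)·α^{RT}·R = α^{DA}·d`, and all the claims follow from this closed form.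
-/

lemma nonneg_of_forall_mul_add_nonneg {a g : ℝ} (ha : 0 < a)
    (h : ∀ t, 0 < t → 0 ≤ t * (g + a * t)) : 0 ≤ g := by
  refine le_of_forall_pos_le_add fun ε hε => ?_
  have ht : 0 < ε / a := div_pos hε ha
  have := nonneg_of_mul_nonneg_right (h (ε / a) ht) ht
  rwa [mul_div_cancel₀ ε ha.ne'] at this

lemma nonpos_of_forall_mul_add_nonneg {a g x : ℝ} (ha : 0 < a) (hx : 0 < x)
    (h : ∀ t, -x ≤ t → 0 ≤ t * (g + a * t)) : g ≤ 0 := by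
  by_contra! hg
  set s := min x (g / a) / 2 with hs_def
  have hs : 0 < s := by positivity
  have hsx : s ≤ x := by linarith [min_le_left x (g / a)]
  have has : a * s < g := by
    have hmin : a * min x (g / a) ≤ g :=
      calc a * min x (g / a) ≤ a * (g / a) := by gcongr; exact min_le_right _ _
        _ = g := mul_div_cancel₀ g ha.ne'
    have : a * s = a * min x (g / a) / 2 := by rw [hs_def]; ring
    linarith
  nlinarith [h (-s) (by linarith)]

section Cournot

variable {ι : Type*} [Fintype ι]

/-- The derivative of `y ↦ expend aDA aRT bDA dem (Function.update p l y) l` at `y = p l`. -/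
def marginalExpend (aDA aRT : ℝ) (dem p : ι → ℝ) (l : ι) : ℝ :=
  aRT * p l + (aDA - aRT) * dem l - aRT * ∑ k, (dem k - p k)

lemma sum_marginalExpend (aDA aRT : ℝ) (dem p : ι → ℝ) :
    ∑ l, marginalExpend aDA aRT dem p l
      = aDA * ∑ k, dem k - (Fintype.card ι + 1) * aRT * ∑ k, (dem k - p k) := by
  simp only [marginalExpend, Finset.sum_sub_distrib, Finset.sum_add_distrib, ← Finset.mul_sum,
    Finset.sum_const, Finset.card_univ, nsmul_eq_mul]
  ring

variable [DecidableEq ι] {aDA aRT bDA : ℝ} {dem p : ι → ℝ}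

lemma expend_update_sub_expend (l : ι) (y : ℝ) :
    expend aDA aRT bDA dem (Function.update p l y) l - expend aDA aRT bDA dem p l
      = (y - p l) * (marginalExpend aDA aRT dem p l + aRT * (y - p l)) := by
  have hupd : ∑ k, Function.update p l y k = ∑ k, p k + (y - p l) := by
    rw [Finset.sum_update_of_mem (Finset.mem_univ l),
      Finset.sum_eq_add_sum_sdiff_singleton_of_mem (Finset.mem_univ l) p]
    ring
  have hsub : ∀ q : ι → ℝ, ∑ k, (dem k - q k) = ∑ k, dem k - ∑ k, q k := fun q =>
    Finset.sum_sub_distrib _ _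
  simp only [expend, marginalExpend, hsub, hupd, Function.update_self]
  ring

lemma IsNash.forall_mul_add_nonneg (hp : IsNash aDA aRT bDA dem p) (l : ι) (t : ℝ)
    (ht : -p l ≤ t) : 0 ≤ t * (marginalExpend aDA aRT dem p l + aRT * t) := by
  have h := hp.2 l (p l + t) (by linarith)
  rwa [← sub_nonneg, expend_update_sub_expend, add_sub_cancel_left] at h

lemma IsNash.marginalExpend_nonneg (hp : IsNash aDA aRT bDA dem p) (ha : 0 < aRT) (l : ι) :
    0 ≤ marginalExpend aDA aRT dem p l :=
  nonneg_of_forall_mul_add_nonneg ha fun t ht =>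
    hp.forall_mul_add_nonneg l t (by linarith [hp.1 l])

lemma IsNash.marginalExpend_eq_zero (hp : IsNash aDA aRT bDA dem p) (ha : 0 < aRT) {l : ι}
    (hl : 0 < p l) : marginalExpend aDA aRT dem p l = 0 :=
  le_antisymm (nonpos_of_forall_mul_add_nonneg ha hl (hp.forall_mul_add_nonneg l))
    (hp.marginalExpend_nonneg ha l)

lemma IsNash.sum_realTime_pos [Nonempty ι] (hp : IsNash aDA aRT bDA dem p) (hDA : 0 < aDA)
    (hRT : 0 < aRT) (hdem : ∀ k, 0 < dem k) : 0 < ∑ k, (dem k - p k) := by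
  by_contra! hR
  have hterm : ∀ k, 0 < dem k - p k := by
    intro k
    rcases (hp.1 k).eq_or_lt with hk | hk
    · rw [← hk, sub_zero]; exact hdem k
    · have := hp.marginalExpend_eq_zero hRT hk
      unfold marginalExpend at this
      nlinarith [hdem k]
  exact hR.not_gt (Finset.sum_pos (fun k _ => hterm k) Finset.univ_nonempty)

lemma IsNash.pos [Nonempty ι] (hp : IsNash aDA aRT bDA dem p) (hDA : 0 < aDA) (hle : aDA ≤ aRT)
    (hdem : ∀ k, 0 < dem k) (l : ι) : 0 < p l := by
  have hRT : 0 < aRT := hDA.trans_le hle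
  have hR := hp.sum_realTime_pos hDA hRT hdem
  have hg := hp.marginalExpend_nonneg hRT l
  unfold marginalExpend at hg
  nlinarith [hdem l]

lemma IsNash.sum_realTime_eq [Nonempty ι] (hp : IsNash aDA aRT bDA dem p) (hDA : 0 < aDA)
    (hle : aDA ≤ aRT) (hdem : ∀ k, 0 < dem k) :
    ∑ k, (dem k - p k) = aDA / ((Fintype.card ι + 1) * aRT) * ∑ k, dem k := by
  have hRT : 0 < aRT := hDA.trans_le hle
  have h := sum_marginalExpend aDA aRT dem p
  rw [Finset.sum_eq_zero fun l _ => hp.marginalExpend_eq_zero hRT (hp.pos hDA hle hdem l)] at h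
  field_simp
  linarith

end Cournot

theorem cournot_equilibrium_aggregate_negative_spread_general
    (L : ℕ) (hL : 1 ≤ L)
    (aDA aRT bDA : ℝ) (h0 : 0 < aDA) (hlt : aDA < aRT)
    (dl : Fin L → ℝ) (hdl : ∀ k, 0 < dl k)
    (d : ℝ) (hd : d = ∑ l, dl l)
    (p : Fin L → ℝ) (hp : IsNash aDA aRT bDA dl p)
    (lamDA lamRT : ℝ)
    (hlamRT : lamRT = aRT * (∑ l, (dl l - p l)) + lamDA) :
    (∑ l, p l = (1 - aDA / (((L : ℝ) + 1) * aRT)) * d) ∧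
    (∑ l, (dl l - p l) = aDA / (((L : ℝ) + 1) * aRT) * d) ∧
    d > ∑ l, p l ∧ ∑ l, p l > (L : ℝ) / ((L : ℝ) + 1) * d ∧
    1 / ((L : ℝ) + 1) * d > ∑ l, (dl l - p l) ∧ 0 < ∑ l, (dl l - p l) ∧
    lamRT > lamDA ∧ lamDA - lamRT < 0 := by
  have : Nonempty (Fin L) := ⟨⟨0, hL⟩⟩
  have hRT : 0 < aRT := h0.trans hlt
  have hR : ∑ l, (dl l - p l) = aDA / (((L : ℝ) + 1) * aRT) * d := by
    simpa [hd] using hp.sum_realTime_eq h0 hlt.le hdl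
  have hRpos : 0 < ∑ l, (dl l - p l) := hp.sum_realTime_pos h0 hRT hdl
  have hS : ∑ l, p l = d - ∑ l, (dl l - p l) := by rw [hd, Finset.sum_sub_distrib]; ring
  have hdpos : 0 < d := by rw [hd]; exact Finset.sum_pos (fun k _ => hdl k) Finset.univ_nonempty
  have hc : aDA / (((L : ℝ) + 1) * aRT) < 1 / ((L : ℝ) + 1) := by
    rw [div_lt_div_iff₀ (by positivity) (by positivity)]
    nlinarith
  have hRlt : ∑ l, (dl l - p l) < 1 / ((L : ℝ) + 1) * d := by
    rw [hR]; exact mul_lt_mul_of_pos_right hc hdpos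
  have hL' : (L : ℝ) / ((L : ℝ) + 1) = 1 - 1 / ((L : ℝ) + 1) := by field_simp; ring
  refine ⟨by rw [hS, hR]; ring, hR, by linarith, by rw [hL']; linarith, hRlt, hRpos, ?_, ?_⟩ <;>
    linarith [mul_pos hRT hRpos]

/-- Aggregate participations and negative spread at the (unique) Nash
equilibrium of the load-side Cournot game with `L ≥ 1` loads of demands `d_l > 0` and
`α^{RT} > α^{DA} > 0`, `β^{DA} ∈ ℝ`:
`∑_l d_l^{DA*} = (1 - α^{DA}/((L+1) α^{RT})) d` and
`∑_l d_l^{RT*} = (α^{DA}/((L+1) α^{RT})) d` where `d = ∑_l d_l`; consequently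
`d > ∑_l d_l^{DA*} > (L/(L+1)) d`, `(1/(L+1)) d > ∑_l d_l^{RT*} > 0`, and the prices
satisfy `λ^{RT} > λ^{DA}`, i.e., a strictly negative spread. -/
theorem cournot_equilibrium_aggregate_negative_spread
    (L : ℕ) (hL : 1 ≤ L)
    (aDA aRT bDA : ℝ) (h0 : 0 < aDA) (hlt : aDA < aRT)
    (dl : Fin L → ℝ) (hdl : ∀ k, 0 < dl k)
    (d : ℝ) (hd : d = ∑ l, dl l)
    (p : Fin L → ℝ) (hp : IsNash aDA aRT bDA dl p)
    (lamDA lamRT : ℝ)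
    (hlamDA : lamDA = aDA * (∑ l, p l) + bDA)
    (hlamRT : lamRT = aRT * (∑ l, (dl l - p l)) + lamDA) :
    (∑ l, p l = (1 - aDA / (((L : ℝ) + 1) * aRT)) * d) ∧
    (∑ l, (dl l - p l) = aDA / (((L : ℝ) + 1) * aRT) * d) ∧
    d > ∑ l, p l ∧ ∑ l, p l > (L : ℝ) / ((L : ℝ) + 1) * d ∧
    1 / ((L : ℝ) + 1) * d > ∑ l, (dl l - p l) ∧ 0 < ∑ l, (dl l - p l) ∧
    lamRT > lamDA ∧ lamDA - lamRT < 0 :=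
  cournot_equilibrium_aggregate_negative_spread_general L hL aDA aRT bDA h0 hlt dl hdl d hd p hp
    lamDA lamRT hlamRT
end
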